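/- arXiv:2104.00956 — 4 statements merged into one kernel-verified Lean document; each statement's English description precedes it below -/
import Mathlib

section
/- Every regular locally gyroscopic invariant paratopological gyrogroup G is completely regular, i.e. for every point x ∈ G and every open set U containing x there is a continuous function f : G → [0,1] with f(x) = 0 and f⁻¹([0,1)) ⊆ U. -/
/-- A gyrogroup: a groupoid with identity, inverses, gyroautomorphisms
satisfying the gyroassociative law and the loop property. -/
structure Gyrogroup (G : Type*) where
  op : G → G → G
  e : G
  inv : G → G
  gyr : G → G → G → G
  op_e : ∀ x, op x e = x
  e_op : ∀ x, op e x = x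
  op_inv : ∀ x, op x (inv x) = e
  inv_op : ∀ x, op (inv x) x = e
  gyr_bijective : ∀ a b, Function.Bijective (gyr a b)
  gyr_hom : ∀ a b x y, gyr a b (op x y) = op (gyr a b x) (gyr a b y)
  gyrassoc : ∀ x y z, op x (op y z) = op (op x y) (gyr x y z)
  loop : ∀ x y, gyr (op x y) y = gyr x y

/-- The gyrogroup cooperation: a ⊞ b = a ⊕ gyr[a, ⊖b] b. -/
def Gyrogroup.coop {G : Type*} (gg : Gyrogroup G) (a b : G) : G :=
  gg.op a (gg.gyr a (gg.inv b) b)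

/-- a ⊟ b = a ⊞ (⊖ b). -/
def Gyrogroup.boxminus {G : Type*} (gg : Gyrogroup G) (a b : G) : G :=
  gg.coop a (gg.inv b)

/-!
Urysohn's construction. Regularity gives a neighbourhood `W` of `e` whose closure lies in
`(⊖x ⊕ U) ∩ U₀`; inside `W` choose members `V n` of the invariant base with
`V (n + 1) ⊕ V (n + 1) ⊆ V n`. Products of the `V n` along binary expansions give sets `U(r)` for
dyadic `r ∈ (0, 1]` with `U(k / 2ⁿ) ⊕ V (n + 1) ⊆ U((k + 1) / 2ⁿ)`: the right gyroassociative law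
`(a ⊕ v) ⊕ w = a ⊕ (v ⊕ gyr[v, a ⊕ v] w)` moves the extra factor inside, and local gyroscopic
invariance keeps it in the right `V`. As `y ⊕ V (n + 1)` is a neighbourhood of `y`, the closure
of `U(r)` lies in the interior of the closure of `U(s)` for `r < s`, so
`y ↦ inf {r | y ∈ closure U(r)}` is continuous; translating by `⊖x` moves its zero to `x`.
-/

open Set Filter Topology

section InfLevel

variable {X : Type*} (F : ℝ → Set X)

noncomputable def infLevel (y : X) : ℝ := sInf (insert 1 {r ∈ Ioo 0 1 | y ∈ F r})

variable {F}

lemma bddBelow_infLevel_set (y : X) : BddBelow (insert 1 {r ∈ Ioo (0 : ℝ) 1 | y ∈ F r}) :=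
  ⟨0, by rintro r (rfl | ⟨hr, -⟩) <;> [norm_num; exact hr.1.le]⟩

lemma infLevel_le {y : X} {r : ℝ} (hr : r ∈ Ioo 0 1) (hy : y ∈ F r) : infLevel F y ≤ r :=
  csInf_le (bddBelow_infLevel_set y) (mem_insert_of_mem _ ⟨hr, hy⟩)

lemma infLevel_le_one (y : X) : infLevel F y ≤ 1 :=
  csInf_le (bddBelow_infLevel_set y) (mem_insert _ _)

lemma le_infLevel {y : X} {c : ℝ} (hc : c ≤ 1) (h : ∀ r ∈ Ioo 0 1, y ∈ F r → c ≤ r) :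
    c ≤ infLevel F y :=
  le_csInf (insert_nonempty _ _) (by rintro r (rfl | ⟨hr, hy⟩) <;> [exact hc; exact h r hr hy])

lemma infLevel_nonneg (y : X) : 0 ≤ infLevel F y :=
  le_infLevel zero_le_one fun _ hr _ => hr.1.le

lemma exists_lt_of_infLevel_lt {y : X} {c : ℝ} (hc : c ≤ 1) (h : infLevel F y < c) :
    ∃ r ∈ Ioo 0 1, y ∈ F r ∧ r < c := by
  obtain ⟨r, hr | ⟨hr, hy⟩, hrc⟩ := exists_lt_of_csInf_lt (insert_nonempty _ _) h
  · exact absurd (hr ▸ hrc) hc.not_gt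
  · exact ⟨r, hr, hy, hrc⟩

lemma infLevel_eq_zero {y : X} (h : ∀ r ∈ Ioo 0 1, y ∈ F r) : infLevel F y = 0 := by
  refine le_antisymm (not_lt.1 fun hpos => ?_) (infLevel_nonneg y)
  have hr : infLevel F y / 2 ∈ Ioo 0 1 :=
    ⟨by positivity, by linarith [infLevel_le_one (F := F) y]⟩
  linarith [infLevel_le hr (h _ hr)]

variable [TopologicalSpace X]

lemma continuous_infLevel
    (hF : ∀ r s, 0 < r → r < s → s < 1 → closure (F r) ⊆ interior (F s)) :
    Continuous (infLevel F) := by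
  refine continuous_iff_continuousAt.2 fun y => tendsto_order.2 ⟨fun c hc => ?_, fun c hc => ?_⟩
  · rcases lt_or_ge c 0 with hc0 | hc0
    · exact .of_forall fun z => hc0.trans_le (infLevel_nonneg z)
    obtain ⟨r, hcr, hrf⟩ := exists_between hc
    obtain ⟨s, hrs, hsf⟩ := exists_between hrf
    have hs1 : s < 1 := hsf.trans_le (infLevel_le_one y)
    have hy : y ∉ closure (F r) := fun hy =>
      (infLevel_le ⟨hc0.trans_lt (hcr.trans hrs), hs1⟩
        (interior_subset (hF r s (hc0.trans_lt hcr) hrs hs1 hy))).not_gt hsf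
    filter_upwards [isClosed_closure.isOpen_compl.mem_nhds hy] with z hz
    refine hcr.trans_le (le_infLevel (hrs.trans hs1).le fun t ht hzt => ?_)
    by_contra! htr
    exact hz (subset_closure
      (interior_subset (hF t r ht.1 htr (hrs.trans hs1) (subset_closure hzt))))
  · rcases lt_or_ge 1 c with hc1 | hc1
    · exact .of_forall fun z => (infLevel_le_one z).trans_lt hc1
    obtain ⟨r, hr, hy, hrc⟩ := exists_lt_of_infLevel_lt hc1 hc
    obtain ⟨s, hrs, hsc⟩ := exists_between hrc
    have hs1 : s < 1 := hsc.trans_le hc1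
    filter_upwards [mem_interior_iff_mem_nhds.1 (hF r s hr.1 hrs hs1 (subset_closure hy))] with z hz
    exact (infLevel_le ⟨hr.1.trans hrs, hs1⟩ hz).trans_lt hsc

end InfLevel

lemma exists_dyadic_btwn {r s : ℝ} (hr : 0 ≤ r) (hrs : r < s) :
    ∃ n k : ℕ, r ≤ k / 2 ^ n ∧ (k + 1 : ℝ) / 2 ^ n < s := by
  obtain ⟨n, hn⟩ := pow_unbounded_of_one_lt (2 / (s - r)) one_lt_two
  have h2n : (0 : ℝ) < 2 ^ n := by positivity
  have hgap : 2 / 2 ^ n < s - r := by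
    rwa [div_lt_iff₀ h2n, mul_comm, ← div_lt_iff₀ (by linarith)]
  refine ⟨n, ⌈r * 2 ^ n⌉₊, by rw [le_div_iff₀ h2n]; exact Nat.le_ceil _, ?_⟩
  have hceil := Nat.ceil_lt_add_one (mul_nonneg hr h2n.le)
  calc (⌈r * 2 ^ n⌉₊ + 1 : ℝ) / 2 ^ n < (r * 2 ^ n + 2) / 2 ^ n :=
        div_lt_div_of_pos_right (by linarith) h2n
    _ = r + 2 / 2 ^ n := by field_simp
    _ < s := by linarith

namespace Gyrogroup

variable {G : Type*} (gg : Gyrogroup G)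

lemma op_left_cancel {a u v : G} (h : gg.op a u = gg.op a v) : u = v := by
  have h' := congrArg (gg.op (gg.inv a)) h
  rw [gg.gyrassoc, gg.gyrassoc, gg.inv_op, gg.e_op, gg.e_op] at h'
  exact (gg.gyr_bijective _ _).injective h'

lemma gyr_e_left (a z : G) : gg.gyr gg.e a z = z :=
  gg.op_left_cancel (a := a) (by rw [← gg.e_op (gg.op a z), gg.gyrassoc, gg.e_op])

lemma gyr_inv_self (a z : G) : gg.gyr (gg.inv a) a z = z := by
  rw [← gg.loop, gg.inv_op, gyr_e_left]

lemma gyr_self_inv (a z : G) : gg.gyr a (gg.inv a) z = z := by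
  rw [← gg.loop, gg.op_inv, gyr_e_left]

lemma inv_op_cancel_left (a z : G) : gg.op (gg.inv a) (gg.op a z) = z := by
  rw [gg.gyrassoc, gg.inv_op, gg.e_op, gyr_inv_self]

lemma op_inv_cancel_left (a z : G) : gg.op a (gg.op (gg.inv a) z) = z := by
  rw [gg.gyrassoc, gg.op_inv, gg.e_op, gyr_self_inv]

-- Expand `⊖a ⊕ (a ⊕ (b ⊕ z))` in two ways with gyroassociativity.
lemma gyr_op_right_gyr (a b z : G) : gg.gyr b (gg.op a b) (gg.gyr a b z) = z := by
  have h := gg.inv_op_cancel_left a (gg.op b z)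
  rw [gg.gyrassoc a b z, gg.gyrassoc (gg.inv a), gg.inv_op_cancel_left] at h
  have hloop := gg.loop (gg.inv a) (gg.op a b)
  rw [gg.inv_op_cancel_left] at hloop
  rw [hloop]
  exact gg.op_left_cancel h

lemma gyr_gyr_op_right (a b z : G) : gg.gyr a b (gg.gyr b (gg.op a b) z) = z :=
  (gg.gyr_bijective b (gg.op a b)).injective (gg.gyr_op_right_gyr a b _)

lemma op_assoc_right (a b c : G) :
    gg.op (gg.op a b) c = gg.op a (gg.op b (gg.gyr b (gg.op a b) c)) := by
  rw [gg.gyrassoc, gyr_gyr_op_right]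

structure IsHalvingSeq (U₀ : Set G) (V : ℕ → Set G) : Prop where
  e_mem : ∀ n, gg.e ∈ V n
  image2_op_subset : ∀ n, image2 gg.op (V (n + 1)) (V (n + 1)) ⊆ V n
  gyr_image_subset : ∀ n, ∀ a ∈ U₀, ∀ b ∈ U₀, gg.gyr a b '' V n ⊆ V n
  zero_subset : V 0 ⊆ U₀

-- `dyadicSet V n k` is the paper's `U(k / 2ⁿ)`, with `U(1) = V 1`: for `k < 2ⁿ` it is the
-- left-to-right product of the `V (i + 1)` over the binary digits `2⁻ⁱ` of `k / 2ⁿ`.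
-- Only `k ≤ 2ⁿ` is meaningful.
def dyadicSet (V : ℕ → Set G) : ℕ → ℕ → Set G
  | 0, k => if k = 0 then {gg.e} else V 1
  | n + 1, k => if k % 2 = 0 then dyadicSet V n (k / 2)
      else image2 gg.op (dyadicSet V n (k / 2)) (V (n + 2))

variable {gg} {U₀ : Set G} (V : ℕ → Set G)

lemma dyadicSet_succ (n k : ℕ) : gg.dyadicSet V (n + 1) k =
    if k % 2 = 0 then gg.dyadicSet V n (k / 2)
    else image2 gg.op (gg.dyadicSet V n (k / 2)) (V (n + 2)) := rfl

lemma dyadicSet_zero_right (n : ℕ) : gg.dyadicSet V n 0 = {gg.e} := by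
  induction n with
  | zero => rfl
  | succ n ih => simp [dyadicSet_succ, ih]

lemma dyadicSet_two_mul (n k : ℕ) : gg.dyadicSet V (n + 1) (2 * k) = gg.dyadicSet V n k := by
  simp [dyadicSet_succ]

lemma dyadicSet_two_mul_add_one (n k : ℕ) :
    gg.dyadicSet V (n + 1) (2 * k + 1) = image2 gg.op (gg.dyadicSet V n k) (V (n + 2)) := by
  simp [dyadicSet_succ, Nat.mul_add_div]

lemma dyadicSet_mul_two_pow (n k m : ℕ) :
    gg.dyadicSet V (n + m) (k * 2 ^ m) = gg.dyadicSet V n k := by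
  induction m with
  | zero => simp
  | succ m ih => rw [← add_assoc, pow_succ, ← mul_assoc, mul_comm _ 2, dyadicSet_two_mul, ih]

lemma dyadicSet_two_pow (n : ℕ) : gg.dyadicSet V n (2 ^ n) = V 1 := by
  simpa [dyadicSet] using gg.dyadicSet_mul_two_pow V 0 1 n

variable {V}

lemma dyadicSet_mono_of_image2_subset {n : ℕ} (he : gg.e ∈ V (n + 1))
    (hstep : ∀ k < 2 ^ n,
      image2 gg.op (gg.dyadicSet V n k) (V (n + 1)) ⊆ gg.dyadicSet V n (k + 1))
    {k l : ℕ} (hkl : k ≤ l) (hl : l ≤ 2 ^ n) : gg.dyadicSet V n k ⊆ gg.dyadicSet V n l := by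
  induction l, hkl using Nat.le_induction with
  | base => exact subset_rfl
  | succ l hkl ih =>
    intro a ha
    simpa only [gg.op_e] using hstep l (by omega) ⟨a, ih (by omega) ha, gg.e, he, rfl⟩

namespace IsHalvingSeq

variable (hV : gg.IsHalvingSeq U₀ V)
include hV

lemma succ_subset (n : ℕ) : V (n + 1) ⊆ V n := fun a ha =>
  hV.image2_op_subset n ⟨a, ha, gg.e, hV.e_mem _, gg.op_e a⟩

lemma antitone : Antitone V := antitone_nat_of_succ_le hV.succ_subset

-- The only use of the gyrations: `v` and `a ⊕ v` lie in `V 0 ⊆ U₀`, so `gyr[v, a ⊕ v]`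
-- preserves `V (n + 1)`.
lemma image2_op_image2_op_subset {A : Set G} (hA : A ⊆ V 1) (n : ℕ) :
    image2 gg.op (image2 gg.op A (V (n + 1))) (V (n + 1)) ⊆ image2 gg.op A (V n) := by
  rintro _ ⟨_, ⟨a, ha, v, hv, rfl⟩, w, hw, rfl⟩
  have hv1 : v ∈ V 1 := hV.antitone (by omega) hv
  have hvU : v ∈ U₀ := hV.zero_subset (hV.succ_subset 0 hv1)
  have havU : gg.op a v ∈ U₀ :=
    hV.zero_subset (hV.image2_op_subset 0 ⟨a, hA ha, v, hv1, rfl⟩)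
  rw [gg.op_assoc_right]
  have hgw : gg.gyr v (gg.op a v) w ∈ V (n + 1) :=
    hV.gyr_image_subset _ v hvU _ havU ⟨w, hw, rfl⟩
  exact ⟨a, ha, _, hV.image2_op_subset n ⟨v, hv, _, hgw, rfl⟩, rfl⟩

lemma image2_op_dyadicSet_subset (n : ℕ) : ∀ k < 2 ^ n,
    image2 gg.op (gg.dyadicSet V n k) (V (n + 1)) ⊆ gg.dyadicSet V n (k + 1) := by
  induction n with
  | zero =>
    intro k hk
    obtain rfl : k = 0 := by omega
    simp [dyadicSet, image2_singleton_left, gg.e_op]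
  | succ n ih =>
    intro k hk
    obtain ⟨j, rfl | rfl⟩ := Nat.even_or_odd' k
    · rw [dyadicSet_two_mul, dyadicSet_two_mul_add_one]
    · have hsub : gg.dyadicSet V n j ⊆ V 1 := gg.dyadicSet_two_pow V n ▸
        gg.dyadicSet_mono_of_image2_subset (hV.e_mem _) ih (by omega) le_rfl
      rw [show 2 * j + 1 + 1 = 2 * (j + 1) by ring, dyadicSet_two_mul, dyadicSet_two_mul_add_one]
      exact (hV.image2_op_image2_op_subset hsub (n + 1)).trans (ih j (by omega))

lemma dyadicSet_mono {n k l : ℕ} (hkl : k ≤ l) (hl : l ≤ 2 ^ n) :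
    gg.dyadicSet V n k ⊆ gg.dyadicSet V n l :=
  gg.dyadicSet_mono_of_image2_subset (hV.e_mem _) (hV.image2_op_dyadicSet_subset n) hkl hl

lemma dyadicSet_subset {n k : ℕ} (hk : k ≤ 2 ^ n) : gg.dyadicSet V n k ⊆ V 1 :=
  gg.dyadicSet_two_pow V n ▸ hV.dyadicSet_mono hk le_rfl

lemma dyadicSet_subset_dyadicSet {n k m l : ℕ} (h : k * 2 ^ m ≤ l * 2 ^ n) (hl : l ≤ 2 ^ m) :
    gg.dyadicSet V n k ⊆ gg.dyadicSet V m l := by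
  rw [← gg.dyadicSet_mul_two_pow V n k m, ← gg.dyadicSet_mul_two_pow V m l n, add_comm m n]
  exact hV.dyadicSet_mono h (by rw [pow_add, mul_comm (2 ^ n)]; exact Nat.mul_le_mul_right _ hl)

end IsHalvingSeq

section Topology

variable [TopologicalSpace G]

variable (gg) in
def dyadicFamily (V : ℕ → Set G) (t : ℝ) : Set G :=
  ⋃ (n : ℕ) (k : ℕ) (_ : (k : ℝ) / 2 ^ n < t), closure (gg.dyadicSet V n k)

lemma e_mem_dyadicFamily {t : ℝ} (ht : 0 < t) : gg.e ∈ gg.dyadicFamily V t :=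
  mem_iUnion₂.2 ⟨0, 0, mem_iUnion.2 ⟨by simpa using ht,
    subset_closure (by rw [dyadicSet_zero_right]; rfl)⟩⟩

lemma IsHalvingSeq.dyadicFamily_subset (hV : gg.IsHalvingSeq U₀ V) {t : ℝ} (ht : t ≤ 1) :
    gg.dyadicFamily V t ⊆ closure (V 1) := by
  refine iUnion₂_subset fun n k => iUnion_subset fun hk => closure_mono (hV.dyadicSet_subset ?_)
  have : (k : ℝ) < 2 ^ n := by rw [← div_lt_one (by positivity)]; linarith
  exact_mod_cast this.le

variable (hcont : Continuous fun p : G × G => gg.op p.1 p.2)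
include hcont

lemma continuous_op_left (a : G) : Continuous (gg.op a) :=
  hcont.comp (continuous_const.prodMk continuous_id)

lemma continuous_op_right (a : G) : Continuous fun z => gg.op z a :=
  hcont.comp (continuous_id.prodMk continuous_const)

lemma op_image_mem_nhds {S : Set G} (hS : S ∈ 𝓝 gg.e) (y : G) : gg.op y '' S ∈ 𝓝 y := by
  have hpre : gg.op (gg.inv y) ⁻¹' S ∈ 𝓝 y :=
    (continuous_op_left hcont _).continuousAt.preimage_mem_nhds (by rwa [gg.inv_op])
  exact mem_of_superset hpre fun z hz => ⟨_, hz, gg.op_inv_cancel_left y z⟩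

lemma exists_image2_op_subset {S : Set G} (hS : S ∈ 𝓝 gg.e) :
    ∃ T ∈ 𝓝 gg.e, image2 gg.op T T ⊆ S := by
  have h : (fun p : G × G => gg.op p.1 p.2) ⁻¹' S ∈ 𝓝 gg.e ×ˢ 𝓝 gg.e := by
    rw [← nhds_prod_eq]
    exact hcont.continuousAt.preimage_mem_nhds (by rwa [gg.op_e])
  obtain ⟨T, hT, hTS⟩ := Filter.mem_prod_self_iff.1 h
  exact ⟨T, hT, image2_subset_iff.2 fun a ha b hb => hTS (mk_mem_prod ha hb)⟩

lemma exists_halving_seq {B : Set (Set G)} (hB : ∀ S ∈ B, S ∈ 𝓝 gg.e)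
    (hbasis : ∀ W ∈ 𝓝 gg.e, ∃ S ∈ B, S ⊆ W) {W : Set G} (hW : W ∈ 𝓝 gg.e) :
    ∃ V : ℕ → Set G, (∀ n, V n ∈ B) ∧ V 0 ⊆ W ∧
      ∀ n, image2 gg.op (V (n + 1)) (V (n + 1)) ⊆ V n := by
  have hhalf (S : Set G) : ∃ T, S ∈ 𝓝 gg.e → T ∈ B ∧ image2 gg.op T T ⊆ S := by
    by_cases hS : S ∈ 𝓝 gg.e
    · obtain ⟨T, hT, hTS⟩ := exists_image2_op_subset hcont hS
      obtain ⟨T', hT'B, hT'T⟩ := hbasis T hT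
      exact ⟨T', fun _ => ⟨hT'B, (image2_subset hT'T hT'T).trans hTS⟩⟩
    · exact ⟨S, fun h => absurd h hS⟩
  choose half hhalf using hhalf
  obtain ⟨S₀, hS₀B, hS₀W⟩ := hbasis W hW
  have hmem : ∀ n, half^[n] S₀ ∈ B := fun n => by
    induction n with
    | zero => exact hS₀B
    | succ n ih => rw [Function.iterate_succ_apply']; exact (hhalf _ (hB _ ih)).1
  refine ⟨fun n => half^[n] S₀, hmem, hS₀W, fun n => ?_⟩
  simp only [Function.iterate_succ_apply']
  exact (hhalf _ (hB _ (hmem n))).2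

variable (hV : gg.IsHalvingSeq U₀ V) (hVn : ∀ n, V n ∈ 𝓝 gg.e)
include hV hVn

lemma IsHalvingSeq.closure_dyadicSet_subset_interior {n k : ℕ} (hk : k < 2 ^ n) :
    closure (gg.dyadicSet V n k) ⊆ interior (closure (gg.dyadicSet V n (k + 1))) := by
  intro y hy
  refine mem_interior_iff_mem_nhds.2
    (mem_of_superset (op_image_mem_nhds hcont (hVn (n + 1)) y) ?_)
  rintro _ ⟨v, hv, rfl⟩
  refine closure_mono ?_
    (image_closure_subset_closure_image (continuous_op_right hcont v) ⟨y, hy, rfl⟩)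
  rintro _ ⟨a, ha, rfl⟩
  exact hV.image2_op_dyadicSet_subset n k hk ⟨a, ha, v, hv, rfl⟩

lemma IsHalvingSeq.closure_dyadicFamily_subset_interior {r s : ℝ} (hr : 0 < r) (hrs : r < s)
    (hs : s < 1) :
    closure (gg.dyadicFamily V r) ⊆ interior (gg.dyadicFamily V s) := by
  obtain ⟨n, k, hrk, hks⟩ := exists_dyadic_btwn hr.le hrs
  have h2n : (0 : ℝ) < 2 ^ n := by positivity
  have hk : k + 1 < 2 ^ n := by
    have : (k + 1 : ℝ) < 2 ^ n := by rw [← div_lt_one h2n]; linarith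
    exact_mod_cast this
  have hsub : gg.dyadicFamily V r ⊆ closure (gg.dyadicSet V n k) := by
    refine iUnion₂_subset fun m l => iUnion_subset fun hl => closure_mono ?_
    refine hV.dyadicSet_subset_dyadicSet ?_ (by omega)
    have : (l : ℝ) * 2 ^ n ≤ k * 2 ^ m := by
      rw [← div_le_div_iff₀ (by positivity) h2n]; linarith
    exact_mod_cast this
  calc closure (gg.dyadicFamily V r) ⊆ closure (gg.dyadicSet V n k) :=
        closure_minimal hsub isClosed_closure
    _ ⊆ interior (closure (gg.dyadicSet V n (k + 1))) :=
        hV.closure_dyadicSet_subset_interior hcont hVn (by omega)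
    _ ⊆ interior (gg.dyadicFamily V s) :=
        interior_mono (subset_iUnion₂_of_subset n (k + 1) (subset_iUnion_of_subset
          (by push_cast; exact hks) subset_rfl))

end Topology

end Gyrogroup

/-- Every regular locally gyroscopic invariant paratopological
gyrogroup is completely regular. -/
theorem stmt_1 {G : Type*} [TopologicalSpace G] (gg : Gyrogroup G)
    (hcont : Continuous fun p : G × G => gg.op p.1 p.2)
    (hlgi : ∃ (B : Set (Set G)) (U : Set G),
      (∀ V ∈ B, V ∈ nhds gg.e) ∧ (∀ W ∈ nhds gg.e, ∃ V ∈ B, V ⊆ W) ∧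
      IsOpen U ∧ gg.e ∈ U ∧
      ∀ V ∈ B, ∀ a ∈ U, ∀ b ∈ U, gg.gyr a b '' V ⊆ V)
    (hreg : ∀ (x : G) (U : Set G), IsOpen U → x ∈ U →
      ∃ V ∈ nhds x, closure V ⊆ U) :
    ∀ (x : G) (U : Set G), IsOpen U → x ∈ U →
      ∃ f : G → ℝ, Continuous f ∧ f x = 0 ∧ (∀ y, f y ∈ Set.Icc (0:ℝ) 1) ∧
        f ⁻¹' Set.Ico (0:ℝ) 1 ⊆ U := by
  intro x U hU hxU
  obtain ⟨B, U₀, hBn, hbasis, hU₀, heU₀, hBgyr⟩ := hlgi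
  have hleft := Gyrogroup.continuous_op_left hcont
  obtain ⟨W, hW, hWcl⟩ := hreg gg.e (gg.op x ⁻¹' U ∩ U₀)
    ((hU.preimage (hleft x)).inter hU₀) ⟨by rwa [Set.mem_preimage, gg.op_e], heU₀⟩
  obtain ⟨V, hVB, hVW, hVhalf⟩ := Gyrogroup.exists_halving_seq hcont hBn hbasis hW
  have hVn (n : ℕ) : V n ∈ 𝓝 gg.e := hBn _ (hVB n)
  have hV : gg.IsHalvingSeq U₀ V :=
    ⟨fun n => mem_of_mem_nhds (hVn n), hVhalf, fun n => hBgyr _ (hVB n),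
      fun y hy => (hWcl (subset_closure (hVW hy))).2⟩
  have hV1W : closure (V 1) ⊆ gg.op x ⁻¹' U := fun y hy =>
    (hWcl (closure_mono ((hV.succ_subset 0).trans hVW) hy)).1
  refine ⟨infLevel (gg.dyadicFamily V) ∘ gg.op (gg.inv x),
    (continuous_infLevel fun r s => hV.closure_dyadicFamily_subset_interior hcont hVn).comp
      (hleft _), ?_, fun y => ⟨infLevel_nonneg _, infLevel_le_one _⟩, fun y hy => ?_⟩
  · rw [Function.comp_apply, gg.inv_op]
    exact infLevel_eq_zero fun r hr => Gyrogroup.e_mem_dyadicFamily hr.1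
  · obtain ⟨r, hr, hyr, -⟩ := exists_lt_of_infLevel_lt le_rfl hy.2
    simpa only [Set.mem_preimage, gg.op_inv_cancel_left] using
      hV1W (hV.dyadicFamily_subset hr.2.le hyr)
end

section
/- Let G and K be gyrogroups and let φ : G → K be a gyrogroup homomorphism, i.e. φ(x⊕y) = φ(x)⊕φ(y) for all x,y ∈ G, and let ker φ = {x ∈ G : φ(x) = e_K} where e_K is the identity of K. Then for all a,b ∈ G, gyr[a,b](ker φ) = ker φ, where gyr[a,b]H = {gyr[a,b]h : h ∈ H}. -/
section Aux
variable {G : Type*} (gg : Gyrogroup G)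

lemma gyro_op_left_inj (a : G) : Function.Injective (gg.op a) := by
  intro x y h
  have h2 := congrArg (gg.op (gg.inv a)) h
  rw [gg.gyrassoc, gg.gyrassoc, gg.inv_op, gg.e_op, gg.e_op] at h2
  exact (gg.gyr_bijective _ _).1 h2

lemma gyro_left_cancel (a x : G) : gg.op (gg.inv a) (gg.op a x) = x := by
  have h1 : gg.gyr gg.e a x = x := by
    have := gg.gyrassoc gg.e a x
    rw [gg.e_op, gg.e_op] at this
    exact (gyro_op_left_inj gg a this.symm)
  rw [gg.gyrassoc, gg.inv_op, gg.e_op]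
  have := gg.loop (gg.inv a) a
  rw [gg.inv_op] at this
  rw [← this, h1]

lemma gyro_eq_e_of_op_self {c : G} (h : gg.op c c = c) : c = gg.e := by
  have h2 := gyro_left_cancel gg c c
  rw [h, gg.inv_op] at h2
  exact h2.symm

lemma gyro_eq_e_of_op_left {u v : G} (h : gg.op u v = u) : v = gg.e := by
  apply gyro_op_left_inj gg u
  rw [h, gg.op_e]

end Aux

/-- The kernel of a gyrogroup homomorphism is invariant under all
gyrations: gyr[a,b](ker φ) = ker φ. -/
theorem stmt_11 {G K : Type*} (gg : Gyrogroup G) (gk : Gyrogroup K)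
    (φ : G → K) (hφ : ∀ x y : G, φ (gg.op x y) = gk.op (φ x) (φ y))
    (a b : G) :
    gg.gyr a b '' {x : G | φ x = gk.e} = {x : G | φ x = gk.e} := by
  have hphie : φ gg.e = gk.e := by
    apply gyro_eq_e_of_op_self gk
    rw [← hφ, gg.op_e]
  have hgyrform : ∀ x : G, gg.gyr a b x =
      gg.op (gg.inv (gg.op a b)) (gg.op a (gg.op b x)) := by
    intro x
    rw [gg.gyrassoc a b x, gyro_left_cancel]
  ext x
  simp only [Set.mem_image, Set.mem_setOf_eq]
  constructor
  · rintro ⟨y, hy, rfl⟩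
    rw [hgyrform, hφ, hφ, hφ, hy, gk.op_e, ← hφ, ← hφ, gg.inv_op, hphie]
  · intro hx
    obtain ⟨y, hy⟩ := (gg.gyr_bijective a b).2 x
    refine ⟨y, ?_, hy⟩
    have h1 : φ (gg.gyr a b y) = gk.e := hy ▸ hx
    rw [hgyrform, hφ, hφ, hφ] at h1
    have h2 : gk.op (φ (gg.inv (gg.op a b))) (φ (gg.op a b)) = gk.e := by
      rw [← hφ, gg.inv_op, hphie]
    rw [hφ] at h2
    have h3 := gyro_op_left_inj gk _ (h1.trans h2.symm)
    have h4 := gyro_op_left_inj gk _ h3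
    exact gyro_eq_e_of_op_left gk (by rw [h4])
end

section
/- Let G and K be gyrogroups, let φ : G → K be a gyrogroup homomorphism (φ(x⊕y) = φ(x)⊕φ(y) for all x,y ∈ G), and let U = ker φ = {x ∈ G : φ(x) = e_K}. Then for every x ∈ G, U⊞x ⊆ x⊕U, where U⊞x = {u⊞x : u ∈ U} and x⊕U = {x⊕u : u ∈ U}. -/
section Aux
variable {G : Type*} (gg : Gyrogroup G)

lemma gyr_left_cancel (a : G) {p q : G} (h : gg.op a p = gg.op a q) : p = q := by
  have h2 := congrArg (gg.op (gg.inv a)) h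
  rw [gg.gyrassoc, gg.gyrassoc, gg.inv_op, gg.e_op, gg.e_op] at h2
  exact (gg.gyr_bijective _ _).1 h2

lemma gyr_e_left (b z : G) : gg.gyr gg.e b z = z := by
  apply gyr_left_cancel gg b
  have := gg.gyrassoc gg.e b z
  rw [gg.e_op, gg.e_op] at this
  exact this.symm

lemma gyr_inv_left (b z : G) : gg.gyr (gg.inv b) b z = z := by
  have := gg.loop (gg.inv b) b
  rw [gg.inv_op] at this
  rw [this.symm, gyr_e_left]

lemma gyr_inv_right (b z : G) : gg.gyr b (gg.inv b) z = z := by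
  have := gg.loop b (gg.inv b)
  rw [gg.op_inv] at this
  rw [this.symm, gyr_e_left]

lemma op_inv_cancel (a z : G) : gg.op a (gg.op (gg.inv a) z) = z := by
  rw [gg.gyrassoc, gg.op_inv, gg.e_op, gyr_inv_right]

lemma inv_op_cancel (a z : G) : gg.op (gg.inv a) (gg.op a z) = z := by
  rw [gg.gyrassoc, gg.inv_op, gg.e_op, gyr_inv_left]

lemma gyr_formula (a b z : G) :
    gg.gyr a b z = gg.op (gg.inv (gg.op a b)) (gg.op a (gg.op b z)) := by
  rw [gg.gyrassoc a b z, inv_op_cancel]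

lemma gyr_inv_inv (a : G) : gg.inv (gg.inv a) = a := by
  apply gyr_left_cancel gg (gg.inv a)
  rw [gg.op_inv, gg.inv_op]

end Aux

section Hom
variable {G K : Type*} (gg : Gyrogroup G) (gk : Gyrogroup K)
  (φ : G → K) (hφ : ∀ x y : G, φ (gg.op x y) = gk.op (φ x) (φ y))

include hφ

lemma phi_e : φ gg.e = gk.e := by
  apply gyr_left_cancel gk (φ gg.e)
  rw [gk.op_e, ← hφ, gg.op_e]

lemma phi_inv (a : G) : φ (gg.inv a) = gk.inv (φ a) := by
  apply gyr_left_cancel gk (φ a)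
  rw [← hφ, gg.op_inv, gk.op_inv, phi_e gg gk φ hφ]

end Hom

/-- For the kernel U of a gyrogroup homomorphism,
U ⊞ x ⊆ x ⊕ U for every x. -/
theorem stmt_13 {G K : Type*} (gg : Gyrogroup G) (gk : Gyrogroup K)
    (φ : G → K) (hφ : ∀ x y : G, φ (gg.op x y) = gk.op (φ x) (φ y))
    (x : G) :
    (fun u => gg.coop u x) '' {u : G | φ u = gk.e} ⊆
      gg.op x '' {u : G | φ u = gk.e} := by
  rintro _ ⟨u, hu, rfl⟩
  simp only [Set.mem_setOf_eq] at hu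
  refine ⟨gg.op (gg.inv x) (gg.coop u x), ?_, op_inv_cancel gg x _⟩
  simp only [Set.mem_setOf_eq]
  have hcoop : φ (gg.coop u x) = φ x := by
    unfold Gyrogroup.coop
    rw [hφ, hu, gk.e_op, gyr_formula, gg.inv_op, gg.op_e, hφ, hu, gk.op_e,
      phi_inv gg gk φ hφ, hφ, hu, phi_inv gg gk φ hφ, gk.e_op, gyr_inv_inv]
  rw [hφ, hcoop, phi_inv gg gk φ hφ, gk.inv_op]
end

section
/- For all complex numbers a, b, v with |a| < 1, |b| < 1, |v| < 1, the Möbius gyration preserves absolute value: |(−(a ⊕_M b)) ⊕_M (a ⊕_M (b ⊕_M v))| = |v|, where ⊕_M denotes Möbius addition (the left-hand side is gyr[a,b]v by the gyrator identity). -/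
/-- Möbius addition on the complex unit disc. -/
noncomputable def mAdd (x y : ℂ) : ℂ := (x + y) / (1 + (starRingEnd ℂ) x * y)

/-!
Writing `c = a ⊕ b`, Möbius addition is gyroassociative with a rotation as gyration:
`a ⊕ (b ⊕ v) = c ⊕ (g v)` where `g = (1 + a b̄) / (1 + ā b)` is a quotient of two complex
conjugate numbers, hence of modulus one. The left cancellation law `(-c) ⊕ (c ⊕ w) = w` then
identifies `(-c) ⊕ (a ⊕ (b ⊕ v))` with `g v`, whose modulus is `|v|`.
-/

open Complex ComplexConjugate

theorem one_add_conj_mul_ne_zero {x y : ℂ} (hx : ‖x‖ < 1) (hy : ‖y‖ ≤ 1) :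
    1 + conj x * y ≠ 0 := by
  intro h
  have hxy : ‖conj x * y‖ < 1 := by
    rw [norm_mul, norm_conj]
    exact mul_lt_one_of_nonneg_of_lt_one_left (norm_nonneg x) hx hy
  rw [eq_neg_of_add_eq_zero_right h, norm_neg, norm_one] at hxy
  exact hxy.false

theorem normSq_one_add_conj_mul_sub_normSq_add (x y : ℂ) :
    normSq (1 + conj x * y) - normSq (x + y) = (1 - normSq x) * (1 - normSq y) := by
  simp only [normSq_apply, add_re, add_im, mul_re, mul_im, conj_re, conj_im, one_re, one_im]
  ring

theorem norm_mAdd_lt_one {x y : ℂ} (hx : ‖x‖ < 1) (hy : ‖y‖ < 1) : ‖mAdd x y‖ < 1 := by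
  have hx' : normSq x < 1 := by
    rw [← Complex.sq_norm]; exact pow_lt_one₀ (norm_nonneg x) hx two_ne_zero
  have hy' : normSq y < 1 := by
    rw [← Complex.sq_norm]; exact pow_lt_one₀ (norm_nonneg y) hy two_ne_zero
  have hsq : ‖x + y‖ ^ 2 < ‖1 + conj x * y‖ ^ 2 := by
    rw [Complex.sq_norm, Complex.sq_norm, ← sub_pos, normSq_one_add_conj_mul_sub_normSq_add]
    exact mul_pos (sub_pos.2 hx') (sub_pos.2 hy')
  rw [mAdd, norm_div, div_lt_one (norm_pos_iff.2 (one_add_conj_mul_ne_zero hx hy.le))]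
  exact lt_of_pow_lt_pow_left₀ 2 (norm_nonneg _) hsq

theorem mAdd_div (x p : ℂ) {q : ℂ} (hq : q ≠ 0) :
    mAdd x (p / q) = (x * q + p) / (q + conj x * p) := by
  rw [mAdd, mul_div_assoc', ← mul_div_mul_right _ _ hq, add_mul, add_mul, one_mul,
    div_mul_cancel₀ _ hq, div_mul_cancel₀ _ hq]

theorem neg_mAdd_mAdd_cancel {x y : ℂ} (hx : ‖x‖ ≠ 1) (hxy : 1 + conj x * y ≠ 0) :
    mAdd (-x) (mAdd x y) = y := by
  have hx' : 1 - conj x * x ≠ 0 := by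
    rw [conj_mul', sub_ne_zero, ne_comm]
    exact_mod_cast (pow_eq_one_iff_of_nonneg (norm_nonneg x) two_ne_zero).not.2 hx
  rw [mAdd.eq_1 x y, mAdd_div _ _ hxy, map_neg]
  rw [show -x * (1 + conj x * y) + (x + y) = y * (1 - conj x * x) by ring,
    show 1 + conj x * y + -conj x * (x + y) = 1 - conj x * x by ring,
    mul_div_cancel_right₀ y hx']

noncomputable def gyrFactor (a b : ℂ) : ℂ := (1 + a * conj b) / (1 + conj a * b)

theorem norm_gyrFactor {a b : ℂ} (hab : 1 + conj a * b ≠ 0) : ‖gyrFactor a b‖ = 1 := by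
  have hconj : 1 + a * conj b = conj (1 + conj a * b) := by simp [mul_comm]
  rw [gyrFactor, hconj, norm_div, norm_conj, div_self (norm_ne_zero_iff.2 hab)]

theorem mAdd_mAdd {a b v : ℂ} (hab : 1 + conj a * b ≠ 0) (hbv : 1 + conj b * v ≠ 0) :
    mAdd a (mAdd b v) = mAdd (mAdd a b) (gyrFactor a b * v) := by
  have hab' : 1 + a * conj b ≠ 0 := by
    simpa [mul_comm] using (map_ne_zero (conj : ℂ →+* ℂ)).2 hab
  have hc : mAdd a b * (1 + conj a * b) = a + b := div_mul_cancel₀ _ hab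
  have hc' : conj (mAdd a b) * (1 + a * conj b) = conj a + conj b := by
    rw [mAdd, map_div₀, map_add, map_add, map_one, map_mul, conj_conj,
      div_mul_cancel₀ _ hab']
  rw [mAdd.eq_1 b v, mAdd_div _ _ hbv, gyrFactor, div_mul_eq_mul_div, mAdd_div _ _ hab, hc,
    ← mul_assoc (conj (mAdd a b)), hc']
  congr 1 <;> ring

/-- Möbius gyrations preserve the absolute value:
|gyr[a,b]v| = |⊖(a⊕b) ⊕ (a ⊕ (b ⊕ v))| = |v|. -/
theorem stmt_17 (a b v : ℂ) (ha : ‖a‖ < 1) (hb : ‖b‖ < 1)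
    (hv : ‖v‖ < 1) :
    ‖mAdd (-(mAdd a b)) (mAdd a (mAdd b v))‖ = ‖v‖ := by
  have hab := one_add_conj_mul_ne_zero ha hb.le
  have hc := norm_mAdd_lt_one ha hb
  have hgv : ‖gyrFactor a b * v‖ = ‖v‖ := by rw [norm_mul, norm_gyrFactor hab, one_mul]
  rw [mAdd_mAdd hab (one_add_conj_mul_ne_zero hb hv.le),
    neg_mAdd_mAdd_cancel hc.ne (one_add_conj_mul_ne_zero hc (hgv ▸ hv.le)), hgv]
end
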